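/- With S and Γ positive definite on ℝ^n and ℝ^m respectively, A ∈ ℝ^{m×n}, and m = 0, the Gaussian posterior mean x̄ = S Aᵀ(A S Aᵀ + Γ)^{−1} y is the unique minimizer over x ∈ ℝ^n of the Tikhonov functional J(x) = ‖y − Ax‖²_{Γ^{−1}} + ‖x‖²_{S^{−1}}, where ‖v‖²_M = ⟨v, Mv⟩. -/

import Mathlib

/-!
Write `M = AᵀΓ⁻¹A + S⁻¹` for the Hessian of the Tikhonov functional `J`. Since `J` is quadratic,
`J (x̄ + d) = J x̄ - 2 d ⬝ ∇ + d ⬝ M d`, and the linear term vanishes exactly when `x̄` solves the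
normal equations `M x̄ = AᵀΓ⁻¹ y`. The posterior mean solves them by the push-through identity
`M S Aᵀ = AᵀΓ⁻¹ (A S Aᵀ + Γ)`, so `J x = J x̄ + (x - x̄) ⬝ M (x - x̄)`, and `M` is positive definite.
-/

open Matrix

variable {R : Type*} [CommRing R] {m n : Type*} [Fintype m] [Fintype n]

theorem Matrix.IsSymm.dotProduct_mulVec_comm {M : Matrix n n R} (hM : M.IsSymm) (u v : n → R) :
    u ⬝ᵥ (M *ᵥ v) = v ⬝ᵥ (M *ᵥ u) := by
  rw [← dotProduct_transpose_mulVec, hM.eq]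

/-- Equivalently `S B (A S B + Γ)⁻¹ = (B Γ⁻¹ A + S⁻¹)⁻¹ B Γ⁻¹`: the posterior gain is the
inverse posterior precision times `B Γ⁻¹`. -/
theorem precision_mul_gain [DecidableEq m] [DecidableEq n] {S : Matrix n n R}
    {Γ : Matrix m m R} (A : Matrix m n R) (B : Matrix n m R) (hS : IsUnit S.det)
    (hΓ : IsUnit Γ.det) (hG : IsUnit (A * S * B + Γ).det) :
    (B * Γ⁻¹ * A + S⁻¹) * (S * B * (A * S * B + Γ)⁻¹) = B * Γ⁻¹ := by
  have push_through : (B * Γ⁻¹ * A + S⁻¹) * (S * B) = B * Γ⁻¹ * (A * S * B + Γ) := by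
    rw [Matrix.add_mul, Matrix.mul_add, nonsing_inv_mul_cancel_left _ _ hS,
      nonsing_inv_mul_cancel_right _ _ hΓ]
    simp only [Matrix.mul_assoc]
  rw [← Matrix.mul_assoc, push_through, mul_nonsing_inv_cancel_right _ _ hG]

def tikhonov (A : Matrix m n R) (P : Matrix m m R) (Q : Matrix n n R) (y : m → R) (x : n → R) :
    R :=
  (y - A *ᵥ x) ⬝ᵥ (P *ᵥ (y - A *ᵥ x)) + x ⬝ᵥ (Q *ᵥ x)

section Tikhonov

variable {A : Matrix m n R} {P : Matrix m m R} {Q : Matrix n n R}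

theorem tikhonov_add (hP : P.IsSymm) (hQ : Q.IsSymm) (y : m → R) (x d : n → R) :
    tikhonov A P Q y (x + d) = tikhonov A P Q y x
      - 2 * (d ⬝ᵥ (Aᵀ *ᵥ (P *ᵥ (y - A *ᵥ x)) - Q *ᵥ x)) + d ⬝ᵥ ((Aᵀ * P * A + Q) *ᵥ d) := by
  unfold tikhonov
  rw [mulVec_add, ← sub_sub]
  generalize y - A *ᵥ x = r
  have cross_P := hP.dotProduct_mulVec_comm r (A *ᵥ d)
  have cross_Q := hQ.dotProduct_mulVec_comm x d
  have adjoint_r : d ⬝ᵥ (Aᵀ *ᵥ (P *ᵥ r)) = (A *ᵥ d) ⬝ᵥ (P *ᵥ r) := by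
    rw [dotProduct_transpose_mulVec, dotProduct_comm]
  have hessian : d ⬝ᵥ ((Aᵀ * P * A + Q) *ᵥ d) = (A *ᵥ d) ⬝ᵥ (P *ᵥ (A *ᵥ d)) + d ⬝ᵥ (Q *ᵥ d) := by
    rw [add_mulVec, dotProduct_add, Matrix.mul_assoc, ← mulVec_mulVec, ← mulVec_mulVec,
      dotProduct_transpose_mulVec, dotProduct_comm]
  simp only [mulVec_sub, mulVec_add, dotProduct_sub, sub_dotProduct, dotProduct_add,
    add_dotProduct, adjoint_r, hessian, cross_P, cross_Q]
  ring

theorem tikhonov_eq_add_of_normal_eq (hP : P.IsSymm) (hQ : Q.IsSymm) (y : m → R) {xbar : n → R}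
    (hnormal : (Aᵀ * P * A + Q) *ᵥ xbar = Aᵀ *ᵥ (P *ᵥ y)) (x : n → R) :
    tikhonov A P Q y x
      = tikhonov A P Q y xbar + (x - xbar) ⬝ᵥ ((Aᵀ * P * A + Q) *ᵥ (x - xbar)) := by
  have gradient_eq_zero : Aᵀ *ᵥ (P *ᵥ (y - A *ᵥ xbar)) - Q *ᵥ xbar = 0 := by
    rw [mulVec_sub, mulVec_sub, ← hnormal, add_mulVec]
    simp only [mulVec_mulVec, Matrix.mul_assoc]
    abel
  have expansion := tikhonov_add (A := A) hP hQ y xbar (x - xbar)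
  rwa [add_sub_cancel, gradient_eq_zero, dotProduct_zero, mul_zero, sub_zero] at expansion

end Tikhonov

/-- With `S`, `Γ` positive definite and zero prior mean, the Gaussian posterior mean
`x̄ = S Aᵀ(A S Aᵀ + Γ)⁻¹ y` is the unique minimizer of the Tikhonov functional
`J(x) = ‖y − Ax‖²_{Γ⁻¹} + ‖x‖²_{S⁻¹}`. -/
theorem posterior_mean_is_tikhonov_minimizer (n m : ℕ)
    (S : Matrix (Fin n) (Fin n) ℝ) (hS : S.PosDef)
    (Γ : Matrix (Fin m) (Fin m) ℝ) (hΓ : Γ.PosDef)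
    (A : Matrix (Fin m) (Fin n) ℝ) (y : Fin m → ℝ) :
    let J : (Fin n → ℝ) → ℝ := fun x =>
      (y - A *ᵥ x) ⬝ᵥ (Γ⁻¹ *ᵥ (y - A *ᵥ x)) + x ⬝ᵥ (S⁻¹ *ᵥ x)
    let xbar : Fin n → ℝ := (S * Aᵀ * (A * S * Aᵀ + Γ)⁻¹) *ᵥ y
    (∀ x, J xbar ≤ J x) ∧ ∀ x, J x = J xbar → x = xbar := by
  intro J xbar
  have hM : (Aᵀ * Γ⁻¹ * A + S⁻¹).PosDef := by
    refine .posSemidef_add ?_ hS.inv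
    simpa [Matrix.mul_assoc] using hΓ.inv.posSemidef.conjTranspose_mul_mul_same A
  have hG : (A * S * Aᵀ + Γ).PosDef := by
    refine .posSemidef_add ?_ hΓ
    simpa [Matrix.mul_assoc] using hS.posSemidef.mul_mul_conjTranspose_same A
  have hnormal : (Aᵀ * Γ⁻¹ * A + S⁻¹) *ᵥ xbar = Aᵀ *ᵥ (Γ⁻¹ *ᵥ y) := by
    rw [mulVec_mulVec, precision_mul_gain A Aᵀ hS.det_pos.ne'.isUnit hΓ.det_pos.ne'.isUnit
      hG.det_pos.ne'.isUnit, mulVec_mulVec]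
  have hJ : ∀ x, J x = J xbar + (x - xbar) ⬝ᵥ ((Aᵀ * Γ⁻¹ * A + S⁻¹) *ᵥ (x - xbar)) :=
    tikhonov_eq_add_of_normal_eq (by simpa using hΓ.inv.isHermitian)
      (by simpa using hS.inv.isHermitian) y hnormal
  refine ⟨fun x => ?_, fun x hx => ?_⟩
  · simpa [hJ x] using hM.posSemidef.dotProduct_mulVec_nonneg (x - xbar)
  · by_contra hne
    have hpos := hM.dotProduct_mulVec_pos (sub_ne_zero.mpr hne)
    simp only [star_trivial] at hpos
    linarith [hJ x]
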